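/- Suppose θ > 0. Let c ∈ ℝ and let A ⊆ V with s ∈ A. Suppose that for every edge (x, y) ∈ E with x ∈ A and y ∉ A one has dist_{G'}(x) + ω*(x, y) ≥ dist_G(y) + c, where ω*(e₀) = ω'(e₀) and ω*(e) = ω(e) for every edge e ≠ e₀. Then dist_{G'}(u) ≥ dist_G(u) + c for every vertex u ∉ A. -/

import Mathlib

namespace DynSPT

variable {V : Type*}

/-- The list of consecutive edges of a path given as a list of vertices. -/
def edgeList (l : List V) : List (V × V) := l.zip l.tail

/-- The length of a path with respect to the weight function `ω`. -/
def len (ω : V → V → ℝ) (l : List V) : ℝ :=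
  ((edgeList l).map fun p => ω p.1 p.2).sum

/-- `l` is a path in the directed graph with edge relation `E`. -/
def IsWalk (E : V → V → Prop) (l : List V) : Prop := l ≠ [] ∧ l.Chain' E

/-- `l` is a path from `u` to `v` in the directed graph with edge relation `E`. -/
def IsWalkFrom (E : V → V → Prop) (l : List V) (u v : V) : Prop :=
  IsWalk E l ∧ l.head? = some u ∧ l.getLast? = some v

/-- The path `l` traverses the edge `e`. -/
def Traverses (l : List V) (e : V × V) : Prop := e ∈ edgeList l

/-- `l` is a cycle: a path with at least one edge whose first and last vertices agree. -/
def IsCycle (E : V → V → Prop) (l : List V) : Prop :=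
  ∃ v, IsWalkFrom E l v v ∧ 2 ≤ l.length

/-- The weighted directed graph `(E, ω)` has a negative cycle. -/
def HasNegCycle (E : V → V → Prop) (ω : V → V → ℝ) : Prop :=
  ∃ l, IsCycle E l ∧ len ω l < 0

/-- The weighted directed graph `(E, ω)` has a zero-length cycle. -/
def HasZeroCycle (E : V → V → Prop) (ω : V → V → ℝ) : Prop :=
  ∃ l, IsCycle E l ∧ len ω l = 0

/-- The distance from `s` to `v`: the infimum of the lengths of paths from `s` to `v`. -/
noncomputable def dist (E : V → V → Prop) (ω : V → V → ℝ) (s v : V) : ℝ :=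
  sInf {L : ℝ | ∃ l, IsWalkFrom E l s v ∧ len ω l = L}

/-- A spanning tree of the directed graph `E` rooted at `s`, recorded by the parent
function together with, for every vertex `v`, the tree path from `s` to `v`. -/
structure RootedTree (E : V → V → Prop) (s : V) where
  parent : V → V
  path : V → List V
  path_root : path s = [s]
  parent_edge : ∀ v, v ≠ s → E (parent v) v
  path_eq : ∀ v, v ≠ s → path v = path (parent v) ++ [v]
  path_isWalkFrom : ∀ v, IsWalkFrom E (path v) s v

/-- `(a, b)` is an edge of the rooted tree `T`. -/
def RootedTree.IsEdge {E : V → V → Prop} {s : V} (T : RootedTree E s) (a b : V) : Prop :=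
  b ≠ s ∧ T.parent b = a

/-- `T` is a shortest-path tree for the weight function `ω`:
every tree path from the root is a shortest path. -/
def IsSPT {E : V → V → Prop} {s : V} (ω : V → V → ℝ) (T : RootedTree E s) : Prop :=
  ∀ v, len ω (T.path v) = dist E ω s v

section Aux

lemma edgeList_cons_cons (a b : V) (l : List V) :
    edgeList (a :: b :: l) = (a, b) :: edgeList (b :: l) := rfl

lemma len_cons_cons (ω : V → V → ℝ) (a b : V) (l : List V) :
    len ω (a :: b :: l) = ω a b + len ω (b :: l) := by
  simp [len, edgeList_cons_cons]

lemma edgeList_split (l₁ : List V) (w : V) (l₂ : List V) :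
    edgeList (l₁ ++ w :: l₂) = edgeList (l₁ ++ [w]) ++ edgeList (w :: l₂) := by
  induction l₁ with
  | nil => simp [edgeList]
  | cons a t ih =>
    cases t with
    | nil => simp [edgeList_cons_cons, edgeList]
    | cons b t' =>
      simp only [List.cons_append, edgeList_cons_cons] at *
      simp [ih]

lemma len_split (ω : V → V → ℝ) (l₁ : List V) (w : V) (l₂ : List V) :
    len ω (l₁ ++ w :: l₂) = len ω (l₁ ++ [w]) + len ω (w :: l₂) := by
  unfold len
  rw [edgeList_split, List.map_append, List.sum_append]

lemma head?_append_cons (l : List V) (a : V) (t t' : List V) :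
    (l ++ a :: t).head? = (l ++ a :: t').head? := by
  cases l <;> simp

lemma len_mono {ω ω' : V → V → ℝ} (h : ∀ a b, ω a b ≤ ω' a b) (l : List V) :
    len ω l ≤ len ω' l := by
  unfold len
  apply List.sum_le_sum
  intro p _
  exact h p.1 p.2

/-- Decompose a non-nodup list around a duplicate. -/
lemma exists_dup {l : List V} (h : ¬ l.Nodup) :
    ∃ (a : V) (l₁ l₂ l₃ : List V), l = l₁ ++ a :: l₂ ++ a :: l₃ := by
  induction l with
  | nil => simp at h
  | cons x xs ih =>
    by_cases hx : x ∈ xs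
    · obtain ⟨l₂, l₃, rfl⟩ := List.append_of_mem hx
      exact ⟨x, [], l₂, l₃, rfl⟩
    · have hxs : ¬ xs.Nodup := fun hn => h (List.nodup_cons.mpr ⟨hx, hn⟩)
      obtain ⟨a, l₁, l₂, l₃, rfl⟩ := ih hxs
      exact ⟨a, x :: l₁, l₂, l₃, rfl⟩

/-- Remove cycles: every walk dominates a nodup walk, given no negative cycle. -/
lemma exists_nodup_walk {E : V → V → Prop} {ω : V → V → ℝ} (hG : ¬ HasNegCycle E ω)
    {s v : V} : ∀ (n : ℕ) (l : List V), l.length ≤ n → IsWalkFrom E l s v →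
      ∃ l', IsWalkFrom E l' s v ∧ l'.Nodup ∧ len ω l' ≤ len ω l := by
  intro n
  induction n with
  | zero =>
    intro l hlen hw
    exact absurd (List.length_eq_zero_iff.mp (Nat.le_zero.mp hlen)) hw.1.1
  | succ n ih =>
    intro l hlen hw
    by_cases hnd : l.Nodup
    · exact ⟨l, hw, hnd, le_refl _⟩
    · obtain ⟨a, l₁, l₂, l₃, rfl⟩ := exists_dup hnd
      obtain ⟨⟨hne, hch⟩, hh, hl⟩ := hw
      -- note: l₁ ++ a :: l₂ ++ a :: l₃ = (l₁ ++ (a :: l₂)) ++ (a :: l₃)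
      unfold List.Chain' at hch; rw [List.isChain_append] at hch
      obtain ⟨hcA, hcB, hjAB⟩ := hch
      rw [List.getLast?_append_cons] at hjAB
      rw [List.isChain_append] at hcA
      obtain ⟨hc1, hc2a, hj1⟩ := hcA
      -- the removed cycle
      have hcyc : IsCycle E ((a :: l₂) ++ [a]) := by
        refine ⟨a, ⟨⟨by simp, ?_⟩, by simp, by rw [List.getLast?_concat]⟩, by simp⟩
        unfold List.Chain'; rw [List.isChain_append]
        refine ⟨hc2a, List.isChain_singleton a, ?_⟩
        intro x hx y hy
        simp at hy; subst hy
        exact hjAB x hx a (by simp)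
      have hcyc_nonneg : 0 ≤ len ω ((a :: l₂) ++ [a]) := by
        by_contra hneg
        exact hG ⟨(a :: l₂) ++ [a], hcyc, by linarith⟩
      -- the shortened walk
      have hw' : IsWalkFrom E (l₁ ++ a :: l₃) s v := by
        refine ⟨⟨by simp, ?_⟩, ?_, ?_⟩
        · unfold List.Chain'; rw [List.isChain_append]
          refine ⟨hc1, hcB, ?_⟩
          intro x hx y hy
          simp at hy; subst hy
          exact hj1 x hx a (by simp)
        · have hh' : (l₁ ++ a :: (l₂ ++ a :: l₃)).head? = some s := by
            simpa using hh
          rw [head?_append_cons l₁ a l₃ (l₂ ++ a :: l₃)]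
          exact hh'
        · rw [List.getLast?_append_cons] at hl
          rw [List.getLast?_append_cons]
          exact hl
      have hlen' : (l₁ ++ a :: l₃).length ≤ n := by
        have h1 : (l₁ ++ a :: l₂ ++ a :: l₃).length ≤ n + 1 := hlen
        simp only [List.length_append, List.length_cons] at h1 ⊢
        omega
      obtain ⟨l', hwl', hnd', hle'⟩ := ih (l₁ ++ a :: l₃) hlen' hw'
      refine ⟨l', hwl', hnd', le_trans hle' ?_⟩
      have e1 : len ω (l₁ ++ a :: l₂ ++ a :: l₃)
          = len ω ((l₁ ++ a :: l₂) ++ [a]) + len ω (a :: l₃) :=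
        len_split ω (l₁ ++ a :: l₂) a l₃
      have e2 : len ω ((l₁ ++ a :: l₂) ++ [a])
          = len ω (l₁ ++ [a]) + len ω ((a :: l₂) ++ [a]) := by
        rw [show (l₁ ++ a :: l₂) ++ [a] = l₁ ++ a :: (l₂ ++ [a]) by simp,
          len_split ω l₁ a (l₂ ++ [a]),
          show a :: (l₂ ++ [a]) = (a :: l₂) ++ [a] by simp]
      have e3 : len ω (l₁ ++ a :: l₃) = len ω (l₁ ++ [a]) + len ω (a :: l₃) :=
        len_split ω l₁ a l₃
      rw [e1, e2, e3]
      linarith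

/-- Lower bound for lengths of all walks from `s` to `v`. -/
lemma walk_lb [Fintype V] {E : V → V → Prop} {ω : V → V → ℝ}
    (hG : ¬ HasNegCycle E ω) (s v : V) :
    ∃ B : ℝ, ∀ l, IsWalkFrom E l s v → B ≤ len ω l := by
  obtain ⟨p, -, hp⟩ := Finset.exists_min_image (Finset.univ : Finset (V × V))
    (fun p => ω p.1 p.2) ⟨(s, s), Finset.mem_univ _⟩
  set m : ℝ := min (ω p.1 p.2) 0 with hm
  have hm0 : m ≤ 0 := min_le_right _ _
  refine ⟨(Fintype.card V : ℝ) * m, ?_⟩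
  intro l hw
  obtain ⟨l', hw', hnd, hle⟩ := exists_nodup_walk hG l.length l (le_refl _) hw
  have hforall : ∀ x ∈ (edgeList l').map (fun p => ω p.1 p.2), m ≤ x := by
    intro x hx
    obtain ⟨q, -, rfl⟩ := List.mem_map.mp hx
    exact le_trans (min_le_left _ _) (hp q (Finset.mem_univ q))
  have h1 : ((edgeList l').map (fun p => ω p.1 p.2)).length • m ≤ len ω l' :=
    List.card_nsmul_le_sum _ m hforall
  have h2 : ((edgeList l').map (fun p => ω p.1 p.2)).length ≤ Fintype.card V := by
    simp only [List.length_map, edgeList, List.length_zip]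
    exact le_trans (le_trans (min_le_left _ _) (le_refl _)) (hnd.length_le_card)
  have h3 : (Fintype.card V : ℝ) * m
      ≤ (((edgeList l').map (fun p => ω p.1 p.2)).length : ℝ) * m :=
    mul_le_mul_of_nonpos_right (Nat.cast_le.mpr h2) hm0
  rw [nsmul_eq_mul] at h1
  linarith [le_trans hle (le_refl (len ω l))]

lemma dist_bddBelow [Fintype V] {E : V → V → Prop} {ω : V → V → ℝ}
    (hG : ¬ HasNegCycle E ω) (s v : V) :
    BddBelow {L : ℝ | ∃ l, IsWalkFrom E l s v ∧ len ω l = L} := by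
  obtain ⟨B, hB⟩ := walk_lb hG s v
  exact ⟨B, fun L ⟨l, hwl, hL⟩ => hL ▸ hB l hwl⟩

lemma dist_le_len [Fintype V] {E : V → V → Prop} {ω : V → V → ℝ}
    (hG : ¬ HasNegCycle E ω) {s v : V} {l : List V} (hw : IsWalkFrom E l s v) :
    dist E ω s v ≤ len ω l :=
  csInf_le (dist_bddBelow hG s v) ⟨l, hw, rfl⟩

/-- Triangle inequality using a walk from `y` to `u`. -/
lemma dist_triangle [Fintype V] {E : V → V → Prop} {ω : V → V → ℝ}
    (hG : ¬ HasNegCycle E ω) {s : V} (hreach : ∀ v, ∃ l, IsWalkFrom E l s v)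
    {y u : V} {q : List V} (hw : IsWalkFrom E (y :: q) y u) :
    dist E ω s u ≤ dist E ω s y + len ω (y :: q) := by
  obtain ⟨p₀, hp₀⟩ := hreach y
  have key : ∀ L ∈ {L : ℝ | ∃ l, IsWalkFrom E l s y ∧ len ω l = L},
      dist E ω s u - len ω (y :: q) ≤ L := by
    rintro L ⟨p, hwp, rfl⟩
    obtain ⟨⟨hpne, hpch⟩, hph, hpl⟩ := hwp
    have hy : p.getLast hpne = y := by
      have := hpl
      rw [List.getLast?_eq_getLast hpne, Option.some_inj] at this
      exact this
    have hpd : p.dropLast ++ [y] = p := by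
      rw [← hy]; exact List.dropLast_append_getLast hpne
    have hcomb : IsWalkFrom E (p.dropLast ++ y :: q) s u := by
      refine ⟨⟨by simp, ?_⟩, ?_, ?_⟩
      · unfold List.Chain'; rw [List.isChain_append]
        have hpch' : List.Chain' E (p.dropLast ++ [y]) := by rw [hpd]; exact hpch
        unfold List.Chain' at hpch'; rw [List.isChain_append] at hpch'
        obtain ⟨hd, -, hj⟩ := hpch'
        refine ⟨hd, hw.1.2, ?_⟩
        intro x hx z hz
        simp at hz; subst hz
        exact hj x hx y (by simp)
      · rw [head?_append_cons p.dropLast y q []]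
        rw [show p.dropLast ++ [y] = p from hpd]
        exact hph
      · rw [List.getLast?_append_cons]
        exact hw.2.2
    have hlen : len ω (p.dropLast ++ y :: q) = len ω p + len ω (y :: q) := by
      rw [len_split, hpd]
    have := dist_le_len hG hcomb
    rw [hlen] at this
    linarith
  have hne : {L : ℝ | ∃ l, IsWalkFrom E l s y ∧ len ω l = L}.Nonempty :=
    ⟨len ω p₀, p₀, hp₀, rfl⟩
  have := le_csInf hne key
  unfold dist at this ⊢
  linarith

/-- Find the first boundary crossing of a walk. -/
lemma exists_crossing (A : Set V) :
    ∀ (l : List V) (s u : V), l.head? = some s → l.getLast? = some u →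
      s ∈ A → u ∉ A →
      ∃ l₁ x y l₂, l = l₁ ++ x :: y :: l₂ ∧ x ∈ A ∧ y ∉ A := by
  intro l
  induction l with
  | nil => intro s u h; simp at h
  | cons a t ih =>
    intro s u hh hl hs hu
    have ha : a = s := by simpa using hh
    subst ha
    cases t with
    | nil =>
      have : a = u := by simpa using hl
      subst this
      exact absurd hs hu
    | cons b t' =>
      by_cases hb : b ∈ A
      · have hl' : (b :: t').getLast? = some u := by
          simpa [List.getLast?_cons_cons] using hl
        obtain ⟨l₁, x, y, l₂, heq, hx, hy⟩ :=
          ih b u rfl hl' hb hu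
        exact ⟨a :: l₁, x, y, l₂, by rw [heq]; simp, hx, hy⟩
      · exact ⟨[], a, b, t', rfl, hs, hb⟩

end Aux

theorem statement_5
    {V : Type*} [Fintype V] (E : V → V → Prop) (ω ω' : V → V → ℝ) (s x₀ y₀ : V)
    (hE₀ : E x₀ y₀)
    (hreach : ∀ v, ∃ l, IsWalkFrom E l s v)
    (hω' : ∀ a b, (a, b) ≠ (x₀, y₀) → ω' a b = ω a b)
    (hG : ¬ HasNegCycle E ω)
    (hθ : 0 < ω' x₀ y₀ - ω x₀ y₀)
    (c : ℝ) (A : Set V) (hsA : s ∈ A)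
    (hbd : ∀ x y, E x y → x ∈ A → y ∉ A →
      dist E ω s y + c ≤ dist E ω' s x + ω' x y) :
    ∀ u ∉ A, dist E ω s u + c ≤ dist E ω' s u := by
  have hωle : ∀ a b, ω a b ≤ ω' a b := by
    intro a b
    by_cases h : (a, b) = (x₀, y₀)
    · simp only [Prod.mk.injEq] at h
      obtain ⟨rfl, rfl⟩ := h
      linarith
    · rw [hω' a b h]
  have hG' : ¬ HasNegCycle E ω' := by
    rintro ⟨l, hc, hneg⟩
    exact hG ⟨l, hc, lt_of_le_of_lt (len_mono hωle l) hneg⟩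
  intro u hu
  obtain ⟨l₀, hl₀⟩ := hreach u
  have hne : {L : ℝ | ∃ l, IsWalkFrom E l s u ∧ len ω' l = L}.Nonempty :=
    ⟨len ω' l₀, l₀, hl₀, rfl⟩
  refine le_csInf hne ?_
  rintro L ⟨l, hw, rfl⟩
  obtain ⟨⟨hlne, hch⟩, hh, hl⟩ := hw
  obtain ⟨l₁, x, y, l₂, rfl, hxA, hyA⟩ := exists_crossing A l s u hh hl hsA hu
  -- decompose the walk at the crossing edge
  have hassoc : l₁ ++ x :: y :: l₂ = (l₁ ++ [x]) ++ y :: l₂ := by simp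
  have hch' : List.Chain' E ((l₁ ++ [x]) ++ y :: l₂) := by rw [← hassoc]; exact hch
  unfold List.Chain' at hch'; rw [List.isChain_append] at hch'
  obtain ⟨hcpre, hcsuf, hj⟩ := hch'
  have hxy : E x y := by
    refine hj x ?_ y (by simp)
    simp [List.getLast?_append_cons]
  have hwpre : IsWalkFrom E (l₁ ++ [x]) s x := by
    refine ⟨⟨by simp, hcpre⟩, ?_, by simp [List.getLast?_append_cons]⟩
    rw [head?_append_cons l₁ x [] (y :: l₂)]
    exact hh
  have hlsuf : (y :: l₂).getLast? = some u := by
    rw [hassoc, List.getLast?_append_cons] at hl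
    exact hl
  have hwsuf : IsWalkFrom E (y :: l₂) y u := ⟨⟨by simp, hcsuf⟩, rfl, hlsuf⟩
  -- length decomposition
  have hlen : len ω' (l₁ ++ x :: y :: l₂)
      = len ω' (l₁ ++ [x]) + ω' x y + len ω' (y :: l₂) := by
    rw [len_split ω' l₁ x (y :: l₂), len_cons_cons]
    ring
  have h1 : dist E ω' s x ≤ len ω' (l₁ ++ [x]) := dist_le_len hG' hwpre
  have h2 : dist E ω s y + c ≤ dist E ω' s x + ω' x y := hbd x y hxy hxA hyA
  have h3 : len ω (y :: l₂) ≤ len ω' (y :: l₂) := len_mono hωle _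
  have h4 : dist E ω s u ≤ dist E ω s y + len ω (y :: l₂) :=
    dist_triangle hG hreach hwsuf
  rw [hlen]
  linarith

end DynSPT
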